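/- arXiv:2204.03209 — 4 statements merged into one kernel-verified Lean document; each statement's English description precedes it below -/
import Mathlib

section
/- Let A be a symmetric d×d matrix with A ≺ uI, let δ_U > 0, and let v ∈ R^d. Define Φ^u(A) = tr[(uI − A)⁻¹]. If c ≥ vᵀ( ((u+δ_U)I − A)⁻² / (Φ^u(A) − Φ^{u+δ_U}(A)) + ((u+δ_U)I − A)⁻¹ )v and c > 0, then Φ^{u+δ_U}(A + (1/c)·vvᵀ) ≤ Φ^u(A) and A + (1/c)·vvᵀ ≺ (u+δ_U)I. -/
/-!
Put `M = (u + δU) I - A` and `q = vᵀ M⁻¹ v`. By the Sherman–Morrison formula the update raises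
the potential from `tr M⁻¹` to `tr M⁻¹ + vᵀ M⁻² v / (c - q)`, and the hypothesis on `c` says
precisely that this increase is at most the gap `Φ^u(A) - Φ^{u+δU}(A)`, which is positive because
`(uI - A)⁻¹ - M⁻¹ = δU (M (uI - A))⁻¹` is positive definite. The hypothesis also forces `c > q`,
and then Cauchy–Schwarz for the form of `M`, `(v ⬝ x)² ≤ q · xᵀ M x`, shows that `M - vvᵀ/c`
stays positive definite.
-/

open Matrix

namespace Matrix

variable {n : Type*} [Fintype n]

theorem PosSemidef.sq_dotProduct_mulVec_le {M : Matrix n n ℝ} (hM : M.PosSemidef) (x y : n → ℝ) :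
    (x ⬝ᵥ M *ᵥ y) ^ 2 ≤ (x ⬝ᵥ M *ᵥ x) * (y ⬝ᵥ M *ᵥ y) := by
  have hsymm : y ⬝ᵥ M *ᵥ x = x ⬝ᵥ M *ᵥ y := by
    rw [dotProduct_mulVec, ← vecMul_transpose, (isHermitian_iff_isSymm.1 hM.isHermitian).eq,
      dotProduct_comm]
  have hquad : ∀ t : ℝ, 0 ≤ (y ⬝ᵥ M *ᵥ y) * (t * t) + 2 * (x ⬝ᵥ M *ᵥ y) * t + x ⬝ᵥ M *ᵥ x := by
    intro t
    have := hM.dotProduct_mulVec_nonneg (x + t • y)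
    rw [star_trivial] at this
    simp only [mulVec_add, mulVec_smul, dotProduct_add, add_dotProduct, dotProduct_smul,
      smul_dotProduct, hsymm, smul_eq_mul] at this
    linarith
  have := discrim_le_zero hquad
  rw [discrim] at this
  linarith

variable [DecidableEq n]

section Field

variable {K : Type*} [Field K]

theorem inv_add_vecMulVec {M : Matrix n n K} (hM : IsUnit M)
    {a b : n → K} (h : 1 + b ⬝ᵥ M⁻¹ *ᵥ a ≠ 0) :
    (M + vecMulVec a b)⁻¹
      = M⁻¹ - (1 + b ⬝ᵥ M⁻¹ *ᵥ a)⁻¹ • vecMulVec (M⁻¹ *ᵥ a) (b ᵥ* M⁻¹) := by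
  refine inv_eq_right_inv ?_
  have hMM : M * M⁻¹ = 1 := mul_nonsing_inv M ((isUnit_iff_isUnit_det M).1 hM)
  rw [add_mul, mul_sub, mul_sub, Matrix.mul_smul, Matrix.mul_smul, mul_vecMulVec, mulVec_mulVec,
    hMM, one_mulVec, vecMulVec_mul, vecMulVec_mul_vecMulVec, vecMulVec_smul]
  set β := b ⬝ᵥ M⁻¹ *ᵥ a
  have : (1 + β)⁻¹ * (1 + β) = 1 := inv_mul_cancel₀ h
  linear_combination (norm := module) this • -vecMulVec a (b ᵥ* M⁻¹)

theorem trace_inv_add_vecMulVec {M : Matrix n n K} (hM : IsUnit M)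
    {a b : n → K} (h : 1 + b ⬝ᵥ M⁻¹ *ᵥ a ≠ 0) :
    (M + vecMulVec a b)⁻¹.trace
      = M⁻¹.trace - b ⬝ᵥ (M ^ 2)⁻¹ *ᵥ a / (1 + b ⬝ᵥ M⁻¹ *ᵥ a) := by
  rw [inv_add_vecMulVec hM h, trace_sub, trace_smul, trace_vecMulVec, dotProduct_comm (M⁻¹ *ᵥ a),
    ← dotProduct_mulVec, mulVec_mulVec, ← sq, inv_pow', smul_eq_mul, inv_mul_eq_div]

theorem trace_inv_sub_smul_vecMulVec {M : Matrix n n K} (hM : IsUnit M)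
    {c : K} (hc : c ≠ 0) {v : n → K} (h : v ⬝ᵥ M⁻¹ *ᵥ v ≠ c) :
    (M - c⁻¹ • vecMulVec v v)⁻¹.trace
      = M⁻¹.trace + v ⬝ᵥ (M ^ 2)⁻¹ *ᵥ v / (c - v ⬝ᵥ M⁻¹ *ᵥ v) := by
  have hβ : 1 + v ⬝ᵥ M⁻¹ *ᵥ (-c⁻¹ • v) = (c - v ⬝ᵥ M⁻¹ *ᵥ v) / c := by
    rw [mulVec_smul, dotProduct_smul, smul_eq_mul]
    field_simp
    ring
  have hcq : (c - v ⬝ᵥ M⁻¹ *ᵥ v) / c ≠ 0 := div_ne_zero (sub_ne_zero.2 h.symm) hc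
  rw [sub_eq_add_neg, ← neg_smul, ← smul_vecMulVec, trace_inv_add_vecMulVec hM (hβ ▸ hcq), hβ,
    mulVec_smul, dotProduct_smul, smul_eq_mul]
  field_simp
  ring

end Field

theorem PosDef.sq_dotProduct_le {M : Matrix n n ℝ} (hM : M.PosDef) (v x : n → ℝ) :
    (v ⬝ᵥ x) ^ 2 ≤ (v ⬝ᵥ M⁻¹ *ᵥ v) * (x ⬝ᵥ M *ᵥ x) := by
  have := hM.posSemidef.sq_dotProduct_mulVec_le x (M⁻¹ *ᵥ v)
  rwa [mulVec_mulVec, mul_nonsing_inv _ ((isUnit_iff_isUnit_det M).1 hM.isUnit), one_mulVec,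
    dotProduct_comm x, dotProduct_comm (M⁻¹ *ᵥ v), mul_comm] at this

theorem PosDef.sub_smul_vecMulVec {M : Matrix n n ℝ} (hM : M.PosDef) {v : n → ℝ} {c : ℝ}
    (h : v ⬝ᵥ M⁻¹ *ᵥ v < c) : (M - c⁻¹ • vecMulVec v v).PosDef := by
  have hc : 0 < c := by
    refine lt_of_le_of_lt ?_ h
    simpa using hM.inv.posSemidef.dotProduct_mulVec_nonneg v
  refine .of_dotProduct_mulVec_pos ?_ fun x hx => ?_
  · exact isHermitian_iff_isSymm.2 (by simp [IsSymm, (isHermitian_iff_isSymm.1 hM.isHermitian).eq])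
  · have hMx : 0 < x ⬝ᵥ M *ᵥ x := by simpa using hM.dotProduct_mulVec_pos hx
    have hvx : x ⬝ᵥ vecMulVec v v *ᵥ x = (v ⬝ᵥ x) ^ 2 := by
      simp [vecMulVec_mulVec, sq, dotProduct_comm x v]
    rw [star_trivial, sub_mulVec, smul_mulVec, dotProduct_sub, dotProduct_smul, smul_eq_mul, hvx,
      sub_pos]
    calc c⁻¹ * (v ⬝ᵥ x) ^ 2 ≤ c⁻¹ * ((v ⬝ᵥ M⁻¹ *ᵥ v) * (x ⬝ᵥ M *ᵥ x)) := by
          gcongr; exact hM.sq_dotProduct_le v x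
      _ < x ⬝ᵥ M *ᵥ x := by
          rw [inv_mul_lt_iff₀ hc]; exact mul_lt_mul_of_pos_right h hMx

theorem PosDef.inv_sub_inv_add_smul_one {P : Matrix n n ℝ} (hP : P.PosDef) {δ : ℝ} (hδ : 0 ≤ δ) :
    P⁻¹ - (P + δ • 1)⁻¹ = δ • (P * P + δ • P)⁻¹ := by
  have hQ : (P + δ • 1).PosDef := hP.add_posSemidef (PosSemidef.one.smul hδ)
  have hPP : P⁻¹ * P = 1 := nonsing_inv_mul _ ((isUnit_iff_isUnit_det P).1 hP.isUnit)
  have hQQ : (P + δ • 1) * (P + δ • 1)⁻¹ = 1 :=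
    mul_nonsing_inv _ ((isUnit_iff_isUnit_det _).1 hQ.isUnit)
  calc P⁻¹ - (P + δ • 1)⁻¹ = P⁻¹ * ((P + δ • 1) - P) * (P + δ • 1)⁻¹ := by
        rw [mul_sub, sub_mul, hPP, Matrix.one_mul, Matrix.mul_assoc, hQQ, Matrix.mul_one]
    _ = δ • ((P + δ • 1) * P)⁻¹ := by
        rw [add_sub_cancel_left, Matrix.mul_smul, Matrix.mul_one, Matrix.smul_mul, mul_inv_rev]
    _ = δ • (P * P + δ • P)⁻¹ := by rw [add_mul, Matrix.smul_mul, Matrix.one_mul]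

theorem PosDef.mul_self {P : Matrix n n ℝ} (hP : P.PosDef) : (P * P).PosDef := by
  have := PosDef.one.conjTranspose_mul_mul_same (mulVec_injective_of_isUnit hP.isUnit)
  rwa [hP.isHermitian.eq, Matrix.mul_one] at this

theorem PosDef.mul_self_add_smul {P : Matrix n n ℝ} (hP : P.PosDef) {δ : ℝ} (hδ : 0 ≤ δ) :
    (P * P + δ • P).PosDef :=
  hP.mul_self.add_posSemidef (hP.posSemidef.smul hδ)

theorem PosDef.trace_inv_add_smul_one_le {P : Matrix n n ℝ} (hP : P.PosDef) {δ : ℝ}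
    (hδ : 0 ≤ δ) : (P + δ • 1)⁻¹.trace ≤ P⁻¹.trace := by
  rw [← sub_nonneg, ← trace_sub, hP.inv_sub_inv_add_smul_one hδ, trace_smul, smul_eq_mul]
  exact mul_nonneg hδ (hP.mul_self_add_smul hδ).inv.posSemidef.trace_nonneg

theorem PosDef.trace_inv_add_smul_one_lt [Nonempty n] {P : Matrix n n ℝ} (hP : P.PosDef) {δ : ℝ}
    (hδ : 0 < δ) : (P + δ • 1)⁻¹.trace < P⁻¹.trace := by
  rw [← sub_pos, ← trace_sub, hP.inv_sub_inv_add_smul_one hδ.le, trace_smul, smul_eq_mul]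
  exact mul_pos hδ (hP.mul_self_add_smul hδ.le).inv.trace_pos

end Matrix

open Matrix in
theorem bss_upper_barrier_general (d : ℕ) (A : Matrix (Fin d) (Fin d) ℝ)
    (u δU : ℝ) (hδU : 0 < δU)
    (hAu : (u • (1 : Matrix (Fin d) (Fin d) ℝ) - A).PosDef)
    (v : Fin d → ℝ) (c : ℝ) (hc : 0 < c)
    (hcge :
      v ⬝ᵥ ((((u + δU) • (1 : Matrix (Fin d) (Fin d) ℝ) - A) ^ 2)⁻¹).mulVec v
          / (((u • (1 : Matrix (Fin d) (Fin d) ℝ) - A)⁻¹).trace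
              - (((u + δU) • (1 : Matrix (Fin d) (Fin d) ℝ) - A)⁻¹).trace)
        + v ⬝ᵥ (((u + δU) • (1 : Matrix (Fin d) (Fin d) ℝ) - A)⁻¹).mulVec v ≤ c) :
    (((u + δU) • (1 : Matrix (Fin d) (Fin d) ℝ) - (A + c⁻¹ • vecMulVec v v))⁻¹).trace
        ≤ ((u • (1 : Matrix (Fin d) (Fin d) ℝ) - A)⁻¹).trace
    ∧ ((u + δU) • (1 : Matrix (Fin d) (Fin d) ℝ) - (A + c⁻¹ • vecMulVec v v)).PosDef := by
  have hshift : (u + δU) • (1 : Matrix (Fin d) (Fin d) ℝ) - A = (u • 1 - A) + δU • 1 := by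
    rw [add_smul]; abel
  rw [hshift] at hcge
  rw [← sub_sub, hshift]
  set P := u • (1 : Matrix (Fin d) (Fin d) ℝ) - A
  set M := P + δU • 1
  have hM : M.PosDef := hAu.add_posSemidef (PosSemidef.one.smul hδU.le)
  rcases eq_or_ne v 0 with rfl | hv
  · simpa using ⟨hAu.trace_inv_add_smul_one_le hδU.le, hM⟩
  obtain ⟨i, -⟩ := Function.ne_iff.mp hv
  have : Nonempty (Fin d) := ⟨i⟩
  have hgap := sub_pos.2 (hAu.trace_inv_add_smul_one_lt hδU)
  have hp : 0 < v ⬝ᵥ (M ^ 2)⁻¹ *ᵥ v := by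
    simpa [sq] using hM.mul_self.inv.dotProduct_mulVec_pos hv
  have hq : v ⬝ᵥ M⁻¹ *ᵥ v < c := by
    linarith [div_pos hp hgap]
  refine ⟨?_, hM.sub_smul_vecMulVec hq⟩
  rw [trace_inv_sub_smul_vecMulVec hM.isUnit hc.ne' hq.ne]
  have hpc : v ⬝ᵥ (M ^ 2)⁻¹ *ᵥ v / (P⁻¹.trace - M⁻¹.trace) ≤ c - v ⬝ᵥ M⁻¹ *ᵥ v := by
    linarith
  linarith [(div_le_comm₀ hgap (sub_pos.2 hq)).1 hpc]

open Matrix in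
theorem bss_upper_barrier (d : ℕ) (A : Matrix (Fin d) (Fin d) ℝ) (hA : A.IsSymm)
    (u δU : ℝ) (hδU : 0 < δU)
    (hAu : (u • (1 : Matrix (Fin d) (Fin d) ℝ) - A).PosDef)
    (v : Fin d → ℝ) (c : ℝ) (hc : 0 < c)
    (hcge :
      v ⬝ᵥ ((((u + δU) • (1 : Matrix (Fin d) (Fin d) ℝ) - A) ^ 2)⁻¹).mulVec v
          / (((u • (1 : Matrix (Fin d) (Fin d) ℝ) - A)⁻¹).trace
              - (((u + δU) • (1 : Matrix (Fin d) (Fin d) ℝ) - A)⁻¹).trace)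
        + v ⬝ᵥ (((u + δU) • (1 : Matrix (Fin d) (Fin d) ℝ) - A)⁻¹).mulVec v ≤ c) :
    (((u + δU) • (1 : Matrix (Fin d) (Fin d) ℝ) - (A + c⁻¹ • vecMulVec v v))⁻¹).trace
        ≤ ((u • (1 : Matrix (Fin d) (Fin d) ℝ) - A)⁻¹).trace
    ∧ ((u + δU) • (1 : Matrix (Fin d) (Fin d) ℝ) - (A + c⁻¹ • vecMulVec v v)).PosDef :=
  bss_upper_barrier_general d A u δU hδU hAu v c hc hcge
end

section
/- Let A be a symmetric d×d matrix with A ≻ ℓI, let δ_L > 0 with Φ_ℓ(A) ≤ 1/δ_L, and let v ∈ R^d. Define Φ_ℓ(A) = tr[(A − ℓI)⁻¹]. If 0 < c ≤ vᵀ( (A − (ℓ+δ_L)I)⁻² / (Φ_{ℓ+δ_L}(A) − Φ_ℓ(A)) − (A − (ℓ+δ_L)I)⁻¹ )v, then Φ_{ℓ+δ_L}(A + (1/c)·vvᵀ) ≤ Φ_ℓ(A) and A + (1/c)·vvᵀ ≻ (ℓ+δ_L)I. -/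
/-!
Since `tr (A - ℓ)⁻¹ ≤ 1 / δ` bounds every eigenvalue of `(A - ℓ)⁻¹` by `1 / δ`, the matrix
`B = A - (ℓ + δ)` is positive semidefinite, and the hypothesis on `c` rules out that it is singular.
By the Sherman–Morrison formula
`tr (B + c⁻¹ vvᵀ)⁻¹ = tr B⁻¹ - vᵀ B⁻² v / (c + vᵀ B⁻¹ v)`,
and the hypothesis on `c` says exactly that the subtracted term is at least `tr B⁻¹ - tr (A - ℓ)⁻¹`.
-/

open Matrix

section

variable {n : Type*} [Fintype n] [DecidableEq n]

theorem Matrix.PosSemidef.le_trace_of_mem_spectrum {M : Matrix n n ℝ} (hM : M.PosSemidef)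
    {μ : ℝ} (hμ : μ ∈ spectrum ℝ M) : μ ≤ M.trace := by
  obtain ⟨i, rfl⟩ := hM.isHermitian.spectrum_real_eq_range_eigenvalues ▸ hμ
  rw [hM.isHermitian.trace_eq_sum_eigenvalues]
  exact Finset.single_le_sum (fun j _ => hM.eigenvalues_nonneg j) (Finset.mem_univ i)

theorem Matrix.PosDef.pos_of_mem_spectrum {M : Matrix n n ℝ} (hM : M.PosDef)
    {μ : ℝ} (hμ : μ ∈ spectrum ℝ M) : 0 < μ := by
  obtain ⟨i, rfl⟩ := hM.isHermitian.spectrum_real_eq_range_eigenvalues ▸ hμ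
  exact hM.eigenvalues_pos i

theorem Matrix.inv_mem_spectrum_inv {K : Type*} [Field K] {M : Matrix n n K} (hM : IsUnit M)
    {μ : K} (hμ : μ ∈ spectrum K M) : μ⁻¹ ∈ spectrum K M⁻¹ := by
  have hμ0 : μ ≠ 0 := fun h => spectrum.zero_notMem K hM (h ▸ hμ)
  simpa [coe_units_inv] using (spectrum.inv_mem_iff (r := Units.mk0 μ hμ0) (a := hM.unit)).mp hμ

open scoped MatrixOrder in
theorem Matrix.PosDef.posSemidef_sub_smul_one_of_trace_inv_le {M : Matrix n n ℝ} (hM : M.PosDef)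
    {δ : ℝ} (hδ : 0 < δ) (h : M⁻¹.trace ≤ 1 / δ) : (M - δ • 1).PosSemidef := by
  rw [← Matrix.le_iff, ← Algebra.algebraMap_eq_smul_one]
  refine algebraMap_le_of_le_spectrum (fun μ hμ => ?_) hM.isHermitian.isSelfAdjoint
  have hμ_pos := hM.pos_of_mem_spectrum hμ
  have := (hM.inv.posSemidef.le_trace_of_mem_spectrum (inv_mem_spectrum_inv hM.isUnit hμ)).trans h
  rwa [one_div, inv_le_inv₀ hμ_pos hδ] at this

theorem Matrix.inv_add_smul_vecMulVec {K : Type*} [Field K] {B : Matrix n n K} (hB : IsUnit B.det)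
    {s : K} (hs : s ≠ 0) (u w : n → K) (h : s⁻¹ + w ⬝ᵥ B⁻¹ *ᵥ u ≠ 0) :
    (B + s • vecMulVec u w)⁻¹
      = B⁻¹ - (s⁻¹ + w ⬝ᵥ B⁻¹ *ᵥ u)⁻¹ • (B⁻¹ * vecMulVec u w * B⁻¹) := by
  set p := w ⬝ᵥ B⁻¹ *ᵥ u
  set k := (s⁻¹ + p)⁻¹
  have hsq : vecMulVec u w * B⁻¹ * vecMulVec u w = p • vecMulVec u w := by
    rw [vecMulVec_mul, vecMulVec_mul_vecMulVec, vecMulVec_smul, ← dotProduct_mulVec]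
  have hcoef : s - k - s * k * p = 0 := by
    linear_combination (-s) * inv_mul_cancel₀ h + k * mul_inv_cancel₀ hs
  refine Matrix.inv_eq_right_inv ?_
  calc (B + s • vecMulVec u w) * (B⁻¹ - k • (B⁻¹ * vecMulVec u w * B⁻¹))
      = 1 + (s - k - s * k * p) • (vecMulVec u w * B⁻¹) := by
        simp only [add_mul, mul_sub, Matrix.mul_smul, Matrix.smul_mul, ← mul_assoc,
          mul_nonsing_inv _ hB, one_mul, hsq, smul_smul]
        module
    _ = 1 := by rw [hcoef, zero_smul, add_zero]

theorem Matrix.trace_inv_add_smul_vecMulVec {K : Type*} [Field K] {B : Matrix n n K}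
    (hB : IsUnit B.det) {s : K} (hs : s ≠ 0) (u w : n → K) (h : s⁻¹ + w ⬝ᵥ B⁻¹ *ᵥ u ≠ 0) :
    (B + s • vecMulVec u w)⁻¹.trace
      = B⁻¹.trace - (s⁻¹ + w ⬝ᵥ B⁻¹ *ᵥ u)⁻¹ * (w ⬝ᵥ (B ^ 2)⁻¹ *ᵥ u) := by
  have htr : (B⁻¹ * vecMulVec u w * B⁻¹).trace = w ⬝ᵥ (B ^ 2)⁻¹ *ᵥ u := by
    rw [trace_mul_comm, ← mul_assoc, mul_vecMulVec, trace_vecMulVec, dotProduct_comm, sq,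
      mul_inv_rev]
  rw [inv_add_smul_vecMulVec hB hs u w h, trace_sub, trace_smul, htr, smul_eq_mul]

theorem Matrix.PosDef.trace_inv_add_smul_vecMulVec_le {B : Matrix n n ℝ} (hB : B.PosDef)
    (v : n → ℝ) {c Φ : ℝ} (hc : 0 < c)
    (hcle : c ≤ v ⬝ᵥ (B ^ 2)⁻¹ *ᵥ v / (B⁻¹.trace - Φ) - v ⬝ᵥ B⁻¹ *ᵥ v) :
    (B + c⁻¹ • vecMulVec v v)⁻¹.trace ≤ Φ := by
  set q := v ⬝ᵥ B⁻¹ *ᵥ v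
  set r := v ⬝ᵥ (B ^ 2)⁻¹ *ᵥ v
  have hq : 0 ≤ q := by simpa using hB.inv.posSemidef.dotProduct_mulVec_nonneg v
  have hr : 0 ≤ r := by simpa using (hB.posSemidef.pow 2).inv.dotProduct_mulVec_nonneg v
  have hcq : 0 < c + q := by positivity
  rw [trace_inv_add_smul_vecMulVec ((isUnit_iff_isUnit_det B).mp hB.isUnit) (inv_ne_zero hc.ne')
    v v (by rw [inv_inv]; exact hcq.ne'), inv_inv]
  -- a non-positive gap `tr B⁻¹ - Φ` would make the right-hand side of `hcle` non-positive
  rcases le_or_gt (B⁻¹.trace - Φ) 0 with hgap | hgap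
  · linarith [div_nonpos_of_nonneg_of_nonpos hr hgap]
  · have : B⁻¹.trace - Φ ≤ r / (c + q) := by
      rw [le_div_iff₀ hcq, mul_comm, ← le_div_iff₀ hgap]; linarith
    rw [div_eq_inv_mul] at this
    linarith

end

open Matrix in
theorem bss_lower_barrier_general (d : ℕ) (A : Matrix (Fin d) (Fin d) ℝ)
    (ℓ δL : ℝ) (hδL : 0 < δL)
    (hAℓ : (A - ℓ • (1 : Matrix (Fin d) (Fin d) ℝ)).PosDef)
    (hΦ : ((A - ℓ • (1 : Matrix (Fin d) (Fin d) ℝ))⁻¹).trace ≤ 1 / δL)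
    (v : Fin d → ℝ) (c : ℝ) (hc : 0 < c)
    (hcle :
      c ≤ v ⬝ᵥ (((A - (ℓ + δL) • (1 : Matrix (Fin d) (Fin d) ℝ)) ^ 2)⁻¹).mulVec v
          / (((A - (ℓ + δL) • (1 : Matrix (Fin d) (Fin d) ℝ))⁻¹).trace
              - ((A - ℓ • (1 : Matrix (Fin d) (Fin d) ℝ))⁻¹).trace)
        - v ⬝ᵥ ((A - (ℓ + δL) • (1 : Matrix (Fin d) (Fin d) ℝ))⁻¹).mulVec v) :
    (((A + c⁻¹ • vecMulVec v v) - (ℓ + δL) • (1 : Matrix (Fin d) (Fin d) ℝ))⁻¹).trace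
        ≤ ((A - ℓ • (1 : Matrix (Fin d) (Fin d) ℝ))⁻¹).trace
    ∧ ((A + c⁻¹ • vecMulVec v v) - (ℓ + δL) • (1 : Matrix (Fin d) (Fin d) ℝ)).PosDef := by
  set B := A - (ℓ + δL) • (1 : Matrix (Fin d) (Fin d) ℝ) with hB_def
  have hB_psd : B.PosSemidef := by
    rw [hB_def, add_smul, ← sub_sub]
    exact hAℓ.posSemidef_sub_smul_one_of_trace_inv_le hδL hΦ
  -- for singular `B` the junk values `B⁻¹ = (B ^ 2)⁻¹ = 0` reduce `hcle` to `c ≤ 0`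
  have hB_det : IsUnit B.det := by
    by_contra h
    have h2 : ¬IsUnit (B ^ 2).det := by rwa [det_pow, isUnit_pow_iff two_ne_zero]
    rw [nonsing_inv_apply_not_isUnit _ h, nonsing_inv_apply_not_isUnit _ h2] at hcle
    simp only [zero_mulVec, dotProduct_zero, trace_zero, zero_sub, zero_div, sub_zero] at hcle
    linarith
  have hB : B.PosDef := hB_psd.posDef_iff_isUnit.mpr ((isUnit_iff_isUnit_det B).mpr hB_det)
  rw [add_sub_right_comm]
  refine ⟨hB.trace_inv_add_smul_vecMulVec_le v hc hcle, hB.add_posSemidef ?_⟩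
  simpa using (posSemidef_vecMulVec_self_star v).smul (inv_nonneg.mpr hc.le)

open Matrix in
theorem bss_lower_barrier (d : ℕ) (A : Matrix (Fin d) (Fin d) ℝ) (hA : A.IsSymm)
    (ℓ δL : ℝ) (hδL : 0 < δL)
    (hAℓ : (A - ℓ • (1 : Matrix (Fin d) (Fin d) ℝ)).PosDef)
    (hΦ : ((A - ℓ • (1 : Matrix (Fin d) (Fin d) ℝ))⁻¹).trace ≤ 1 / δL)
    (v : Fin d → ℝ) (c : ℝ) (hc : 0 < c)
    (hcle :
      c ≤ v ⬝ᵥ (((A - (ℓ + δL) • (1 : Matrix (Fin d) (Fin d) ℝ)) ^ 2)⁻¹).mulVec v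
          / (((A - (ℓ + δL) • (1 : Matrix (Fin d) (Fin d) ℝ))⁻¹).trace
              - ((A - ℓ • (1 : Matrix (Fin d) (Fin d) ℝ))⁻¹).trace)
        - v ⬝ᵥ ((A - (ℓ + δL) • (1 : Matrix (Fin d) (Fin d) ℝ))⁻¹).mulVec v) :
    (((A + c⁻¹ • vecMulVec v v) - (ℓ + δL) • (1 : Matrix (Fin d) (Fin d) ℝ))⁻¹).trace
        ≤ ((A - ℓ • (1 : Matrix (Fin d) (Fin d) ℝ))⁻¹).trace
    ∧ ((A + c⁻¹ • vecMulVec v v) - (ℓ + δL) • (1 : Matrix (Fin d) (Fin d) ℝ)).PosDef :=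
  bss_lower_barrier_general d A ℓ δL hδL hAℓ hΦ v c hc hcle
end

section
/- Let v_1,…,v_m ∈ R^d with ∑_i v_i v_iᵀ = I, let A be symmetric with ℓI ≺ A ≺ uI, Φ^u(A) ≤ ε, Φ_ℓ(A) ≤ ε, and parameters satisfying 0 ≤ 1/δ_U + ε < 1/δ_L − ε. With L = (A−(ℓ+δ_L)I)⁻²/(Φ_{ℓ+δ_L}(A) − Φ_ℓ(A)) − (A−(ℓ+δ_L)I)⁻¹ and U = ((u+δ_U)I−A)⁻²/(Φ^u(A) − Φ^{u+δ_U}(A)) + ((u+δ_U)I−A)⁻¹, assume ∑_i v_iᵀ L v_i ≥ 1/δ_L − ε and ∑_i v_iᵀ U v_i ≤ 1/δ_U + ε. Then there exists j ∈ [m] with v_jᵀ(L − U)v_j > 0. -/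
open Matrix in
theorem bss_positive_witness (m d : ℕ) (v : Fin m → Fin d → ℝ)
    (A : Matrix (Fin d) (Fin d) ℝ) (hA : A.IsSymm)
    (hiso : ∑ i, vecMulVec (v i) (v i) = (1 : Matrix (Fin d) (Fin d) ℝ))
    (u ℓ ε δU δL : ℝ) (hδU : 0 < δU) (hδL : 0 < δL)
    (hAu : (u • (1 : Matrix (Fin d) (Fin d) ℝ) - A).PosDef)
    (hAℓ : (A - ℓ • (1 : Matrix (Fin d) (Fin d) ℝ)).PosDef)
    (hΦu : ((u • (1 : Matrix (Fin d) (Fin d) ℝ) - A)⁻¹).trace ≤ ε)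
    (hΦℓ : ((A - ℓ • (1 : Matrix (Fin d) (Fin d) ℝ))⁻¹).trace ≤ ε)
    (hparam0 : 0 ≤ 1 / δU + ε) (hparam : 1 / δU + ε < 1 / δL - ε)
    (L Um : Matrix (Fin d) (Fin d) ℝ)
    (hL : L = (((A - (ℓ + δL) • (1 : Matrix (Fin d) (Fin d) ℝ))⁻¹).trace
              - ((A - ℓ • (1 : Matrix (Fin d) (Fin d) ℝ))⁻¹).trace)⁻¹
            • ((A - (ℓ + δL) • (1 : Matrix (Fin d) (Fin d) ℝ)) ^ 2)⁻¹
          - (A - (ℓ + δL) • (1 : Matrix (Fin d) (Fin d) ℝ))⁻¹)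
    (hU : Um = (((u • (1 : Matrix (Fin d) (Fin d) ℝ) - A)⁻¹).trace
              - (((u + δU) • (1 : Matrix (Fin d) (Fin d) ℝ) - A)⁻¹).trace)⁻¹
            • (((u + δU) • (1 : Matrix (Fin d) (Fin d) ℝ) - A) ^ 2)⁻¹
          + ((u + δU) • (1 : Matrix (Fin d) (Fin d) ℝ) - A)⁻¹)
    (hsumL : 1 / δL - ε ≤ ∑ i, v i ⬝ᵥ L.mulVec (v i))
    (hsumU : ∑ i, v i ⬝ᵥ Um.mulVec (v i) ≤ 1 / δU + ε) :
    ∃ j, 0 < v j ⬝ᵥ (L - Um).mulVec (v j) := by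
  have hpos : 0 < ∑ i, v i ⬝ᵥ (L - Um).mulVec (v i) := by
    have heq : ∀ i, v i ⬝ᵥ (L - Um).mulVec (v i)
        = v i ⬝ᵥ L.mulVec (v i) - v i ⬝ᵥ Um.mulVec (v i) := by
      intro i
      simp [Matrix.sub_mulVec, dotProduct_sub]
    simp only [heq, Finset.sum_sub_distrib]
    have := hparam
    linarith
  by_contra h
  push_neg at h
  have : ∑ i, v i ⬝ᵥ (L - Um).mulVec (v i) ≤ 0 :=
    Finset.sum_nonpos fun i _ => h i
  linarith
end

section
/- Let Z ⪰ 0 be a d×d PSD matrix with λ_min(Z) ≤ 1, α > 0, and A = (αZ + cI)⁻² where c ∈ R is such that αZ + cI ≻ 0 and tr(A) = 1. Then ⟨A, Z⟩ ≤ √d/α + λ_min(Z). -/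
/-!
Write `M = αZ + cI`, so that `A = M⁻²` and `Z = α⁻¹(M - cI)`. Then
`⟨A, Z⟩ = α⁻¹(tr M⁻¹ - c tr A) = α⁻¹(tr M⁻¹ - c)`. Cauchy–Schwarz gives
`(tr M⁻¹)² ≤ d · tr M⁻² = d`, and `αμ + c` is an eigenvalue of `M ≻ 0`, so `-c < αμ`.
-/

open Matrix

namespace Matrix

variable {n R : Type*} [Fintype n]

theorem sq_trace_le_card_mul_trace_transpose_mul [CommRing R] [LinearOrder R]
    [IsStrictOrderedRing R] (N : Matrix n n R) :
    N.trace ^ 2 ≤ Fintype.card n * (Nᵀ * N).trace := calc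
  N.trace ^ 2 ≤ Fintype.card n * ∑ i, N i i ^ 2 := sq_sum_le_card_mul_sum_sq
  _ ≤ Fintype.card n * ∑ i, ∑ j, N j i ^ 2 := by
    gcongr with i
    exact Finset.single_le_sum (f := fun j => N j i ^ 2) (fun j _ => sq_nonneg _)
      (Finset.mem_univ i)
  _ = Fintype.card n * (Nᵀ * N).trace := by
    simp only [trace, diag, mul_apply, transpose_apply, sq]

theorem IsSymm.trace_le_sqrt_card_mul_trace_mul_self {N : Matrix n n ℝ} (hN : N.IsSymm) :
    N.trace ≤ √(Fintype.card n * (N * N).trace) := by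
  refine (le_abs_self _).trans (Real.abs_le_sqrt ?_)
  simpa only [hN.eq] using sq_trace_le_card_mul_trace_transpose_mul N

theorem PosDef.pos_of_mulVec_eq_smul {M : Matrix n n ℝ} (hM : M.PosDef) {v : n → ℝ}
    (hv : v ≠ 0) {r : ℝ} (hMv : M *ᵥ v = r • v) : 0 < r := by
  have h := hM.dotProduct_mulVec_pos hv
  rw [hMv, dotProduct_smul, smul_eq_mul, star_trivial] at h
  exact pos_of_mul_pos_left h (dotProduct_self_star_nonneg v)

theorem trace_inv_sq_mul_sub_smul_one [DecidableEq n] [CommRing R] {M : Matrix n n R}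
    (hM : IsUnit M.det) (c : R) :
    ((M ^ 2)⁻¹ * (M - c • 1)).trace = M⁻¹.trace - c * ((M ^ 2)⁻¹).trace := by
  rw [← inv_pow', sq, Matrix.mul_sub, Matrix.mul_assoc, nonsing_inv_mul M hM, Matrix.mul_one,
    Matrix.mul_smul, Matrix.mul_one, trace_sub, trace_smul, smul_eq_mul]

end Matrix

theorem inner_A_Z_le_general (d : ℕ) (Z : Matrix (Fin d) (Fin d) ℝ) (hZ : Z.PosSemidef)
    (μ α c : ℝ) (hα : 0 < α)
    (hμmem : ∃ i, hZ.isHermitian.eigenvalues i = μ)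
    (hpos : (α • Z + c • (1 : Matrix (Fin d) (Fin d) ℝ)).PosDef)
    (A : Matrix (Fin d) (Fin d) ℝ)
    (hA : A = ((α • Z + c • (1 : Matrix (Fin d) (Fin d) ℝ)) ^ 2)⁻¹)
    (htr : A.trace = 1) :
    (A * Z).trace ≤ Real.sqrt d / α + μ := by
  set M := α • Z + c • (1 : Matrix (Fin d) (Fin d) ℝ) with hM
  have hZM : Z = α⁻¹ • (M - c • 1) := by
    rw [hM, add_sub_cancel_right, smul_smul, inv_mul_cancel₀ hα.ne', one_smul]
  have htr_inv : M⁻¹.trace ≤ √d := by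
    have hsymm : M⁻¹.IsSymm := hpos.inv.isHermitian
    simpa only [Fintype.card_fin, ← sq, inv_pow', ← hA, htr, mul_one] using
      hsymm.trace_le_sqrt_card_mul_trace_mul_self
  have hc : 0 < α * μ + c := by
    obtain ⟨i, rfl⟩ := hμmem
    have hv : (hZ.isHermitian.eigenvectorBasis i).ofLp ≠ 0 := fun h =>
      hZ.isHermitian.eigenvectorBasis.orthonormal.ne_zero i ((WithLp.ofLp_eq_zero 2).mp h)
    refine hpos.pos_of_mulVec_eq_smul hv ?_
    rw [add_mulVec, smul_mulVec, smul_mulVec, one_mulVec, hZ.isHermitian.mulVec_eigenvectorBasis,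
      smul_smul, add_smul]
  calc (A * Z).trace = α⁻¹ * (M⁻¹.trace - c) := by
        rw [hZM, Matrix.mul_smul, trace_smul, smul_eq_mul, hA, trace_inv_sq_mul_sub_smul_one
          ((isUnit_iff_isUnit_det M).mp hpos.isUnit) c, ← hA, htr, mul_one]
    _ ≤ α⁻¹ * (√d + α * μ) := by gcongr; linarith
    _ = √d / α + μ := by rw [mul_add, inv_mul_cancel_left₀ hα.ne', inv_mul_eq_div]

theorem inner_A_Z_le (d : ℕ) (Z : Matrix (Fin d) (Fin d) ℝ) (hZ : Z.PosSemidef)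
    (μ α c : ℝ) (hα : 0 < α)
    (hμmin : ∀ i, μ ≤ hZ.isHermitian.eigenvalues i)
    (hμmem : ∃ i, hZ.isHermitian.eigenvalues i = μ)
    (hμ1 : μ ≤ 1)
    (hpos : (α • Z + c • (1 : Matrix (Fin d) (Fin d) ℝ)).PosDef)
    (A : Matrix (Fin d) (Fin d) ℝ)
    (hA : A = ((α • Z + c • (1 : Matrix (Fin d) (Fin d) ℝ)) ^ 2)⁻¹)
    (htr : A.trace = 1) :
    (A * Z).trace ≤ Real.sqrt d / α + μ :=
  inner_A_Z_le_general d Z hZ μ α c hα hμmem hpos A hA htr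
end
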